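/- Let U and W be finite-dimensional complex vector spaces, α ∈ U and β ∈ W nonzero, and a, b ≥ 0. If ω ∈ Λ^a U ⊗ Λ^b W satisfies L_α L_β ω = 0, then there exist η₁ ∈ Λ^{a−1} U ⊗ Λ^b W and η₂ ∈ Λ^a U ⊗ Λ^{b−1} W with ω = L_α η₁ + L_β η₂. (Exactness of the symbol complex of the Schweitzer complex in the Aeppli degree.) -/

import Mathlib

open scoped TensorProduct

variable {U W : Type} [AddCommGroup U] [Module ℂ U] [AddCommGroup W] [Module ℂ W]

/-- Left wedge multiplication `L_α = α ∧ -` on exterior powers. -/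
noncomputable def Lmul (α : U) (a : ℕ) : ⋀[ℂ]^a U →ₗ[ℂ] ⋀[ℂ]^(a + 1) U :=
  (LinearMap.mulLeft ℂ (ExteriorAlgebra.ι ℂ α)).restrict fun x hx => by
    have h1 : ExteriorAlgebra.ι ℂ α ∈ ⋀[ℂ]^1 U := by
      show ExteriorAlgebra.ι ℂ α ∈ LinearMap.range (ExteriorAlgebra.ι ℂ (M := U)) ^ 1
      rw [pow_one]; exact LinearMap.mem_range_self _ α
    exact (Nat.add_comm 1 a) ▸ SetLike.mul_mem_graded h1 hx

lemma Lmul_Lmul (α : U) (a : ℕ) (x : ⋀[ℂ]^a U) :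
    Lmul α (a + 1) (Lmul α a x) = 0 := by
  apply Subtype.ext
  show ExteriorAlgebra.ι ℂ α * (ExteriorAlgebra.ι ℂ α * (x : ExteriorAlgebra ℂ U)) = 0
  rw [← mul_assoc, ExteriorAlgebra.ι_sq_zero, zero_mul]

/-- `BX U W r s = Λ^r U ⊗ Λ^s W` for `r, s ≥ 0`, and the zero space otherwise. -/
noncomputable def BX (U W : Type) [AddCommGroup U] [Module ℂ U] [AddCommGroup W] [Module ℂ W] :
    ℤ → ℤ → Type
  | Int.ofNat a, Int.ofNat b => ⋀[ℂ]^a U ⊗[ℂ] ⋀[ℂ]^b W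
  | Int.ofNat _, Int.negSucc _ => PUnit
  | Int.negSucc _, _ => PUnit

noncomputable instance : ∀ r s, AddCommGroup (BX U W r s)
  | Int.ofNat a, Int.ofNat b => inferInstanceAs (AddCommGroup (⋀[ℂ]^a U ⊗[ℂ] ⋀[ℂ]^b W))
  | Int.ofNat _, Int.negSucc _ => inferInstanceAs (AddCommGroup PUnit)
  | Int.negSucc _, Int.ofNat _ => inferInstanceAs (AddCommGroup PUnit)
  | Int.negSucc _, Int.negSucc _ => inferInstanceAs (AddCommGroup PUnit)

noncomputable instance : ∀ r s, Module ℂ (BX U W r s)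
  | Int.ofNat a, Int.ofNat b => inferInstanceAs (Module ℂ (⋀[ℂ]^a U ⊗[ℂ] ⋀[ℂ]^b W))
  | Int.ofNat _, Int.negSucc _ => inferInstanceAs (Module ℂ PUnit)
  | Int.negSucc _, Int.ofNat _ => inferInstanceAs (Module ℂ PUnit)
  | Int.negSucc _, Int.negSucc _ => inferInstanceAs (Module ℂ PUnit)

/-- The operator `L_α = (α ∧ -) ⊗ id` on `BX U W`. -/
noncomputable def Bd1 (α : U) : ∀ r s, BX U W r s →ₗ[ℂ] BX U W (r + 1) s
  | Int.ofNat a, Int.ofNat b => TensorProduct.map (Lmul α a) (LinearMap.id (M := ⋀[ℂ]^b W))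
  | Int.ofNat _, Int.negSucc _ => 0
  | Int.negSucc _, _ => 0

/-- The operator `L_β = id ⊗ (β ∧ -)` on `BX U W`. -/
noncomputable def Bd2u (β : W) : ∀ r s, BX U W r s →ₗ[ℂ] BX U W r (s + 1)
  | Int.ofNat a, Int.ofNat b => TensorProduct.map (LinearMap.id (M := ⋀[ℂ]^a U)) (Lmul β b)
  | Int.ofNat _, Int.negSucc _ => 0
  | Int.negSucc _, _ => 0

/-- The signed operator `(-1)^r L_β = (-1)^r (id ⊗ (β ∧ -))` on `BX U W`. -/
noncomputable def Bd2s (β : W) : ∀ r s, BX U W r s →ₗ[ℂ] BX U W r (s + 1)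
  | Int.ofNat a, Int.ofNat b =>
      ((-1 : ℂ) ^ a) • TensorProduct.map (LinearMap.id (M := ⋀[ℂ]^a U)) (Lmul β b)
  | Int.ofNat _, Int.negSucc _ => 0
  | Int.negSucc _, _ => 0

/-- Transport of `BX` along equalities of the indices. -/
noncomputable def BXcast {r s r' s' : ℤ} (h1 : r = r') (h2 : s = s') :
    BX U W r s ≃ₗ[ℂ] BX U W r' s' := by
  subst h1; subst h2; exact LinearEquiv.refl ℂ _

/-! Pick `f` with `f α = 1` and `g` with `g β = 1`. Contraction `ι_f` with `f` is a contracting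
homotopy for `L_α` (`L_α ι_f + ι_f L_α = id`), likewise `ι_g` for `L_β`, and `ι_g` commutes with
`L_α`. Hence `ω = L_β ι_g ω + ι_g L_β ω`, and `L_α L_β ω = 0` gives `L_β ω = L_α ι_f L_β ω`, so
`ι_g L_β ω = L_α (ι_g ι_f L_β ω)`. Since `BX` vanishes in negative degrees, the homotopy
identities hold in every bidegree of `ℤ × ℤ`. -/

section ContractingHomotopy

variable {R : Type*} [Ring R] {X : ℤ → ℤ → Type*} [∀ r s, AddCommGroup (X r s)]
  [∀ r s, Module R (X r s)]

theorem exists_eq_add_of_contractingHomotopy (d₁ : ∀ r s, X r s →ₗ[R] X (r + 1) s)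
    (d₂ : ∀ r s, X r s →ₗ[R] X r (s + 1)) (h₁ : ∀ r s, X (r + 1) s →ₗ[R] X r s)
    (h₂ : ∀ r s, X r (s + 1) →ₗ[R] X r s)
    (hd₁ : ∀ r s x, d₁ r s (h₁ r s x) + h₁ (r + 1) s (d₁ (r + 1) s x) = x)
    (hd₂ : ∀ r s x, d₂ r s (h₂ r s x) + h₂ r (s + 1) (d₂ r (s + 1) x) = x)
    (hcomm : ∀ r s x, h₂ (r + 1) s (d₁ r (s + 1) x) = d₁ r s (h₂ r s x))
    {r s : ℤ} (ω : X (r + 1) (s + 1)) (hω : d₁ (r + 1) (s + 1 + 1) (d₂ (r + 1) (s + 1) ω) = 0) :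
    ∃ η₁ η₂, ω = d₁ r (s + 1) η₁ + d₂ (r + 1) s η₂ := by
  set τ := d₂ (r + 1) (s + 1) ω
  have hτ : d₁ r (s + 1 + 1) (h₁ r (s + 1 + 1) τ) = τ := by
    simpa [hω] using hd₁ r (s + 1 + 1) τ
  refine ⟨h₂ r (s + 1) (h₁ r (s + 1 + 1) τ), h₂ (r + 1) s ω, ?_⟩
  calc ω = d₂ (r + 1) s (h₂ (r + 1) s ω) + h₂ (r + 1) (s + 1) τ := (hd₂ _ _ ω).symm
    _ = _ := by rw [← hcomm r (s + 1), hτ]; exact add_comm _ _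

end ContractingHomotopy

section Contraction

variable {R V : Type*} [CommRing R] [AddCommGroup V] [Module R V]

theorem CliffordAlgebra.contractLeft_mem_exteriorPower (f : Module.Dual R V) :
    ∀ (n : ℕ) {x : ExteriorAlgebra R V}, x ∈ ⋀[R]^(n + 1) V → contractLeft f x ∈ ⋀[R]^n V
  | 0, x, hx => by
    rw [ExteriorAlgebra.exteriorPower, zero_add, pow_one] at hx
    obtain ⟨v, rfl⟩ := hx
    rw [ExteriorAlgebra.ι, contractLeft_ι, ExteriorAlgebra.exteriorPower, pow_zero]
    exact Submodule.algebraMap_mem _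
  | n + 1, x, hx => by
    rw [ExteriorAlgebra.exteriorPower, pow_succ'] at hx
    refine Submodule.mul_induction_on hx ?_ fun _ _ hx hy => by
      rw [map_add]; exact add_mem hx hy
    rintro _ ⟨v, rfl⟩ y hy
    rw [ExteriorAlgebra.ι, contractLeft_ι_mul]
    refine sub_mem (Submodule.smul_mem _ _ hy) ?_
    rw [ExteriorAlgebra.exteriorPower, pow_succ']
    exact Submodule.mul_mem_mul (LinearMap.mem_range_self _ v)
      (contractLeft_mem_exteriorPower f n hy)

noncomputable def exteriorPower.contractLeft (f : Module.Dual R V) (n : ℕ) :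
    ⋀[R]^(n + 1) V →ₗ[R] ⋀[R]^n V :=
  (CliffordAlgebra.contractLeft f).restrict fun _ =>
    CliffordAlgebra.contractLeft_mem_exteriorPower f n

theorem ExteriorAlgebra.ι_mul_contractLeft_add_contractLeft_ι_mul {α : V}
    {f : Module.Dual R V} (hf : f α = 1) (x : ExteriorAlgebra R V) :
    ι R α * CliffordAlgebra.contractLeft f x + CliffordAlgebra.contractLeft f (ι R α * x) = x := by
  rw [ι, CliffordAlgebra.contractLeft_ι_mul, hf, one_smul, add_sub_cancel]

end Contraction

section Wedge

variable {V : Type} [AddCommGroup V] [Module ℂ V] {α : V} {f : Module.Dual ℂ V}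

theorem Lmul_comp_contractLeft_add_contractLeft_comp_Lmul (hf : f α = 1) (n : ℕ) :
    Lmul α n ∘ₗ exteriorPower.contractLeft f n
      + exteriorPower.contractLeft f (n + 1) ∘ₗ Lmul α (n + 1) = LinearMap.id :=
  LinearMap.ext fun x =>
    Subtype.ext (ExteriorAlgebra.ι_mul_contractLeft_add_contractLeft_ι_mul hf x)

theorem contractLeft_comp_Lmul_zero (hf : f α = 1) :
    exteriorPower.contractLeft f 0 ∘ₗ Lmul α 0 = LinearMap.id := by
  refine LinearMap.ext fun x => Subtype.ext ?_
  obtain ⟨c, hc⟩ : (x : ExteriorAlgebra ℂ V) ∈ LinearMap.range (Algebra.linearMap ℂ _) := by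
    rw [← Submodule.one_eq_range, ← pow_zero (LinearMap.range (ExteriorAlgebra.ι ℂ (M := V)))]
    exact x.2
  have h := ExteriorAlgebra.ι_mul_contractLeft_add_contractLeft_ι_mul hf
    (Algebra.linearMap ℂ _ c)
  rw [Algebra.linearMap_apply, CliffordAlgebra.contractLeft_algebraMap, mul_zero, zero_add,
    ← Algebra.linearMap_apply, hc] at h
  exact h

end Wedge

noncomputable def Bh1 (f : Module.Dual ℂ U) : ∀ r s, BX U W (r + 1) s →ₗ[ℂ] BX U W r s
  | Int.ofNat a, Int.ofNat b => (exteriorPower.contractLeft f a).rTensor (⋀[ℂ]^b W)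
  | Int.ofNat _, Int.negSucc _ => 0
  | Int.negSucc _, _ => 0

noncomputable def Bh2 (g : Module.Dual ℂ W) : ∀ r s, BX U W r (s + 1) →ₗ[ℂ] BX U W r s
  | Int.ofNat a, Int.ofNat b => (exteriorPower.contractLeft g b).lTensor (⋀[ℂ]^a U)
  | Int.ofNat _, Int.negSucc _ => 0
  | Int.negSucc _, _ => 0

instance BX.subsingleton_negSucc_left (k : ℕ) (s : ℤ) :
    Subsingleton (BX U W (Int.negSucc k) s) := by
  cases s <;> exact inferInstanceAs (Subsingleton PUnit)

instance BX.subsingleton_negSucc_right (r : ℤ) (k : ℕ) :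
    Subsingleton (BX U W r (Int.negSucc k)) := by
  cases r <;> exact inferInstanceAs (Subsingleton PUnit)

theorem Bd1_Bh1_add_Bh1_Bd1 {α : U} {f : Module.Dual ℂ U} (hf : f α = 1) :
    ∀ r s (x : BX U W (r + 1) s),
      Bd1 α r s (Bh1 f r s x) + Bh1 f (r + 1) s (Bd1 α (r + 1) s x) = x
  | Int.ofNat a, Int.ofNat b, x => by
    have h := congrArg (LinearMap.rTensor (⋀[ℂ]^b W))
      (Lmul_comp_contractLeft_add_contractLeft_comp_Lmul hf a)
    rw [LinearMap.rTensor_add, LinearMap.rTensor_comp, LinearMap.rTensor_comp,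
      LinearMap.rTensor_id] at h
    exact LinearMap.congr_fun h x
  | Int.negSucc 0, Int.ofNat b, x => by
    have h := congrArg (LinearMap.rTensor (⋀[ℂ]^b W)) (contractLeft_comp_Lmul_zero hf)
    rw [LinearMap.rTensor_comp, LinearMap.rTensor_id] at h
    exact (zero_add _).trans (LinearMap.congr_fun h x)
  | Int.negSucc (n + 1), s, x => @Subsingleton.elim (BX U W (Int.negSucc n) s) _ _ _
  | _, Int.negSucc _, _ => Subsingleton.elim _ _

theorem Bd2u_Bh2_add_Bh2_Bd2u {β : W} {g : Module.Dual ℂ W} (hg : g β = 1) :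
    ∀ r s (x : BX U W r (s + 1)),
      Bd2u β r s (Bh2 g r s x) + Bh2 g r (s + 1) (Bd2u β r (s + 1) x) = x
  | Int.ofNat a, Int.ofNat b, x => by
    have h := congrArg (LinearMap.lTensor (⋀[ℂ]^a U))
      (Lmul_comp_contractLeft_add_contractLeft_comp_Lmul hg b)
    rw [LinearMap.lTensor_add, LinearMap.lTensor_comp, LinearMap.lTensor_comp,
      LinearMap.lTensor_id] at h
    exact LinearMap.congr_fun h x
  | Int.ofNat a, Int.negSucc 0, x => by
    have h := congrArg (LinearMap.lTensor (⋀[ℂ]^a U)) (contractLeft_comp_Lmul_zero hg)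
    rw [LinearMap.lTensor_comp, LinearMap.lTensor_id] at h
    exact (zero_add _).trans (LinearMap.congr_fun h x)
  | r, Int.negSucc (n + 1), x => @Subsingleton.elim (BX U W r (Int.negSucc n)) _ _ _
  | Int.negSucc _, _, _ => Subsingleton.elim _ _

theorem Bh2_Bd1_comm (α : U) (g : Module.Dual ℂ W) :
    ∀ r s (x : BX U W r (s + 1)), Bh2 g (r + 1) s (Bd1 α r (s + 1) x) = Bd1 α r s (Bh2 g r s x)
  | Int.ofNat _, Int.ofNat _, x => LinearMap.congr_fun
      ((LinearMap.lTensor_comp_rTensor _ _ _).trans (LinearMap.rTensor_comp_lTensor _ _ _).symm) x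
  | Int.negSucc _, _, _ => by simp only [Bd1, LinearMap.zero_apply, map_zero]
  | Int.ofNat _, Int.negSucc _, _ => Subsingleton.elim _ _

theorem BXcast_BXcast {r₁ r₂ r₃ s₁ s₂ s₃ : ℤ} (h₁ : r₁ = r₂) (h₂ : s₁ = s₂) (h₃ : r₂ = r₃)
    (h₄ : s₂ = s₃) (x : BX U W r₁ s₁) :
    BXcast h₃ h₄ (BXcast h₁ h₂ x) = BXcast (h₁.trans h₃) (h₂.trans h₄) x := by
  subst h₁ h₂ h₃ h₄; rfl

theorem BXcast_self {r s : ℤ} (h₁ : r = r) (h₂ : s = s) (x : BX U W r s) : BXcast h₁ h₂ x = x :=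
  rfl

theorem Bd1_BXcast (α : U) {r r' s : ℤ} (h : r = r') (x : BX U W r s) :
    Bd1 α r' s (BXcast h rfl x) = BXcast (congrArg (· + 1) h) rfl (Bd1 α r s x) := by
  subst h; rfl

theorem Bd2u_BXcast (β : W) {r s s' : ℤ} (h : s = s') (x : BX U W r s) :
    Bd2u β r s' (BXcast rfl h x) = BXcast rfl (congrArg (· + 1) h) (Bd2u β r s x) := by
  subst h; rfl

/-- Exactness of the symbol complex of the Schweitzer complex in the Aeppli degree:
if `ω ∈ Λ^a U ⊗ Λ^b W` satisfies `L_α L_β ω = 0` (for `α, β` nonzero), then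
`ω = L_α η₁ + L_β η₂` for some `η₁ ∈ Λ^{a-1} U ⊗ Λ^b W` and `η₂ ∈ Λ^a U ⊗ Λ^{b-1} W`. -/
theorem symbol_exact_aeppli_degree (U W : Type) [AddCommGroup U] [Module ℂ U]
    [AddCommGroup W] [Module ℂ W]
    (α : U) (β : W) (hα : α ≠ 0) (hβ : β ≠ 0) (a b : ℤ)
    (ω : BX U W a b) (h : Bd1 α a (b + 1) (Bd2u β a b ω) = 0) :
    ∃ (η₁ : BX U W (a - 1) b) (η₂ : BX U W a (b - 1)),
      ω = BXcast (show a - 1 + 1 = a by omega) rfl (Bd1 α (a - 1) b η₁)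
        + BXcast rfl (show b - 1 + 1 = b by omega) (Bd2u β a (b - 1) η₂) := by
  obtain ⟨f, hf⟩ := Module.Projective.exists_dual_eq_one ℂ hα
  obtain ⟨g, hg⟩ := Module.Projective.exists_dual_eq_one ℂ hβ
  obtain ⟨r, rfl⟩ : ∃ r, a = r + 1 := ⟨a - 1, by omega⟩
  obtain ⟨s, rfl⟩ : ∃ s, b = s + 1 := ⟨b - 1, by omega⟩
  obtain ⟨η₁, η₂, hη⟩ := exists_eq_add_of_contractingHomotopy (Bd1 α) (Bd2u β) (Bh1 f) (Bh2 g)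
    (Bd1_Bh1_add_Bh1_Bd1 hf) (Bd2u_Bh2_add_Bh2_Bd2u hg) (Bh2_Bd1_comm α g) ω h
  refine ⟨BXcast (by omega) rfl η₁, BXcast rfl (by omega) η₂, ?_⟩
  rwa [Bd1_BXcast, Bd2u_BXcast, BXcast_BXcast, BXcast_BXcast, BXcast_self, BXcast_self]
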